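/- Let A ∈ ℤ^{m×n} with 1 ≤ m < n satisfy the regularity assumptions, let v = A·1, and let L_A^⊥ = {z ∈ ℤ^n : A z = 0}. Then the covering radius satisfies μ_1(P(A, v) − 1, L_A^⊥) ≤ ((n−m)/2)·M(A), where M(A) is the maximal absolute value of the m×m minors of A and P(A, v) − 1 is the translate of the knapsack polytope P(A, v) by the negative of the all-ones vector. -/

import Mathlib

open scoped BigOperators
open Matrix

noncomputable section

/-- The real matrix obtained from an integer matrix. -/
def Rmat {m n : ℕ} (A : Matrix (Fin m) (Fin n) ℤ) : Matrix (Fin m) (Fin n) ℝ :=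
  A.map (Int.cast : ℤ → ℝ)

/-- The real vector obtained from an integer vector. -/
def Rvec {m : ℕ} (b : Fin m → ℤ) : Fin m → ℝ := fun i => (b i : ℝ)

/-- The knapsack polytope P(A,b) = {x ≥ 0 : A x = b}. -/
def knap {m n : ℕ} (A : Matrix (Fin m) (Fin n) ℤ) (b : Fin m → ℝ) : Set (Fin n → ℝ) :=
  {x | (∀ i, 0 ≤ x i) ∧ (Rmat A).mulVec x = b}

/-- The set F_s(A) of integer vectors b for which P(A,b) contains at least s integer points. -/
def feas {m n : ℕ} (s : ℕ) (A : Matrix (Fin m) (Fin n) ℤ) : Set (Fin m → ℤ) :=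
  {b | s ≤ Set.ncard {x : Fin n → ℤ | (∀ i, 0 ≤ x i) ∧ A.mulVec x = b}}

/-- The cone generated by the columns of A. -/
def coneOf {m n : ℕ} (A : Matrix (Fin m) (Fin n) ℤ) : Set (Fin m → ℝ) :=
  {y | ∃ x : Fin n → ℝ, (∀ i, 0 ≤ x i) ∧ (Rmat A).mulVec x = y}

/-- The generalized diagonal s-Frobenius number g_s(A, w). -/
def gDiag {m n : ℕ} (s : ℕ) (A : Matrix (Fin m) (Fin n) ℤ) (w : Fin m → ℝ) : ℝ :=
  sInf {t : ℝ | 0 ≤ t ∧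
    ∀ b : Fin m → ℤ, Rvec b ∈ interior ((fun c => t • w + c) '' coneOf A) → b ∈ feas s A}

/-- v = A·1 is the sum of the columns of A (as a real vector). -/
def vA {m n : ℕ} (A : Matrix (Fin m) (Fin n) ℤ) : Fin m → ℝ :=
  (Rmat A).mulVec (fun _ => 1)

/-- The diagonal s-Frobenius number g_s(A) = g_s(A, A·1). -/
def gFrob {m n : ℕ} (s : ℕ) (A : Matrix (Fin m) (Fin n) ℤ) : ℝ := gDiag s A (vA A)

/-- The regularity assumptions: the m×m minors of A have gcd 1, and the only
nonnegative real solution of A x = 0 is x = 0. -/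
def regular {m n : ℕ} (A : Matrix (Fin m) (Fin n) ℤ) : Prop :=
  Finset.univ.gcd (fun I : Fin m ↪ Fin n => (A.submatrix id ⇑I).det) = 1 ∧
  ∀ x : Fin n → ℝ, (∀ i, 0 ≤ x i) → (Rmat A).mulVec x = 0 → x = 0

/-- The s-covering radius of K with respect to L: the smallest μ > 0 such that every
point of the real span of L lies in y + μK for at least s distinct y ∈ L. -/
def muCov {N : ℕ} (s : ℕ) (K L : Set (Fin N → ℝ)) : ℝ :=
  sInf {μ : ℝ | 0 < μ ∧ ∀ x ∈ Submodule.span ℝ L,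
    ∃ T : Finset (Fin N → ℝ), ↑T ⊆ L ∧ s ≤ T.card ∧ ∀ y ∈ T, ∃ k ∈ K, x = y + μ • k}

/-- The set of absolute values of m×m minors of A. -/
def minorAbs {m n : ℕ} (A : Matrix (Fin m) (Fin n) ℤ) : Set ℤ :=
  {d | ∃ I : Fin m ↪ Fin n, d = |(A.submatrix id ⇑I).det|}

/-- m(A): the minimal absolute m×m minor of A. -/
def mMin {m n : ℕ} (A : Matrix (Fin m) (Fin n) ℤ) : ℤ := sInf (minorAbs A)

/-- M(A): the maximal absolute m×m minor of A. -/
def mMax {m n : ℕ} (A : Matrix (Fin m) (Fin n) ℤ) : ℤ := sSup (minorAbs A)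

/-- The lattice L_A^⊥ = {z ∈ ℤ^n : A z = 0}, viewed as a subset of ℝ^n. -/
def kerLat {m n : ℕ} (A : Matrix (Fin m) (Fin n) ℤ) : Set (Fin n → ℝ) :=
  {x | ∃ z : Fin n → ℤ, A.mulVec z = 0 ∧ x = Rvec z}

/-- √(det (A Aᵀ)). -/
def sqrtDet {m n : ℕ} (A : Matrix (Fin m) (Fin n) ℤ) : ℝ :=
  Real.sqrt (((A * Aᵀ).det : ℤ) : ℝ)

/-- The s-Frobenius number of a positive primitive integer vector. -/
def sFrob {n : ℕ} (s : ℕ) (a : Fin n → ℤ) : ℤ :=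
  sSup {b : ℤ | Set.ncard {x : Fin n → ℤ | (∀ i, 0 ≤ x i) ∧ ∑ i, a i * x i = b} < s}

/-- The full-rank lattice in ℝ^d with basis the columns of an invertible matrix B. -/
def latSet {d : ℕ} (B : Matrix (Fin d) (Fin d) ℝ) : Set (Fin d → ℝ) :=
  {x | ∃ z : Fin d → ℤ, x = B.mulVec (fun i => (z i : ℝ))}

/-- The absolute s-inhomogeneous minimum ϑ_s(K) = inf_L μ_s(K,L)/det(L)^{1/d}. -/
def theta (s d : ℕ) (K : Set (Fin d → ℝ)) : ℝ :=
  sInf {r : ℝ | ∃ B : Matrix (Fin d) (Fin d) ℝ, B.det ≠ 0 ∧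
    r = muCov s K (latSet B) / |B.det| ^ ((1 : ℝ) / d)}

/-- The standard simplex S_d ⊂ ℝ^d. -/
def stdSimplex' (d : ℕ) : Set (Fin d → ℝ) :=
  {x | (∀ i, 0 ≤ x i) ∧ ∑ i, x i ≤ 1}

/-!
Fix a nonsingular minor `B = A_I` with `D = det B`; one exists because the minors have gcd `1`.
For `j ∉ I` the integer vectors `D (eⱼ - B⁻¹ Aⱼ)` lie in `L_A^⊥`, and by Cramer's rule their
entries are `m × m` minors of `A`, hence bounded by `M(A)`. Every real `x` with `A x = 0` equals
`∑_{j ∉ I} (x_j / D) D (eⱼ - B⁻¹ Aⱼ)`; rounding these `n - m` coefficients gives `z ∈ L_A^⊥` with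
`‖x - z‖_∞ ≤ (n - m) / 2 · M(A) =: μ`. Then `(x - z) / μ ≥ -1` lies in `ker A`, i.e. in
`P(A, v) - 1`.
-/

open Function

section

variable {m n : ℕ}

lemma abs_det_submatrix_le_mMax (A : Matrix (Fin m) (Fin n) ℤ) (I : Fin m ↪ Fin n) :
    |(A.submatrix id I).det| ≤ mMax A := by
  have hfin : (minorAbs A).Finite := by
    convert Set.finite_range fun I : Fin m ↪ Fin n => |(A.submatrix id I).det| using 1
    ext d; simp [minorAbs, eq_comm]
  exact le_csSup hfin.bddAbove ⟨I, rfl⟩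

lemma exists_det_submatrix_ne_zero {A : Matrix (Fin m) (Fin n) ℤ} (hA : regular A) :
    ∃ I : Fin m ↪ Fin n, (A.submatrix id I).det ≠ 0 := by
  by_contra! h
  have h0 := Finset.gcd_eq_zero_iff.mpr fun I (_ : I ∈ Finset.univ) => h I
  exact one_ne_zero (hA.1.symm.trans h0)

lemma Rmat_mulVec_Rvec (A : Matrix (Fin m) (Fin n) ℤ) (z : Fin n → ℤ) :
    Rmat A *ᵥ Rvec z = Rvec (A *ᵥ z) := by
  funext i
  simp [Rmat, Rvec, mulVec, dotProduct]

lemma Rvec_zero : Rvec (0 : Fin m → ℤ) = 0 :=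
  funext fun _ => Int.cast_zero

lemma det_Rmat_submatrix (A : Matrix (Fin m) (Fin n) ℤ) (I : Fin m ↪ Fin n) :
    ((Rmat A).submatrix id I).det = (A.submatrix id I).det :=
  ((Int.castRingHom ℝ).map_det _).symm

lemma mulVec_extend_embedding {R : Type*} [Semiring R] (M : Matrix (Fin m) (Fin n) R)
    (I : Fin m ↪ Fin n) (f : Fin m → R) :
    M *ᵥ extend I f 0 = M.submatrix id I *ᵥ f := by
  funext i
  simp only [mulVec, dotProduct, submatrix_apply, id]
  rw [← Finset.sum_subset (Finset.subset_univ (Finset.univ.map I)) fun l _ hl => by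
    rw [extend_apply' f (0 : Fin n → R) l (by simpa using hl), Pi.zero_apply, mul_zero],
    Finset.sum_map]
  simp only [I.injective.extend_apply]

lemma eq_zero_of_mulVec_eq_zero_of_eq_zero_off_range {R : Type*} [CommRing R] [IsDomain R]
    (M : Matrix (Fin m) (Fin n) R) {I : Fin m ↪ Fin n} (hI : (M.submatrix id I).det ≠ 0)
    {y : Fin n → R} (hy : M *ᵥ y = 0) (hoff : ∀ i ∉ Set.range I, y i = 0) : y = 0 := by
  have hext : y = extend I (y ∘ I) 0 := by
    funext i
    by_cases hi : i ∈ Set.range I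
    · obtain ⟨k, rfl⟩ := hi
      exact (I.injective.extend_apply (y ∘ I) 0 k).symm
    · rw [hoff i hi, extend_apply' _ _ _ (by simpa using hi), Pi.zero_apply]
  have hyI : y ∘ I = 0 :=
    eq_zero_of_mulVec_eq_zero hI (by rwa [← mulVec_extend_embedding, ← hext])
  rw [hext, hyI]
  exact extend_const I (0 : R)

lemma smul_eq_sum_of_mulVec_eq_zero {R : Type*} [CommRing R] [IsDomain R]
    (M : Matrix (Fin m) (Fin n) R) {I : Fin m ↪ Fin n} (hI : (M.submatrix id I).det ≠ 0)
    (d : R) (z : Fin n → Fin n → R) (hz : ∀ j, M *ᵥ z j = 0)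
    (hzoff : ∀ j, ∀ i ∉ Set.range I, z j i = (Pi.single j d : Fin n → R) i)
    {x : Fin n → R} (hx : M *ᵥ x = 0) :
    d • x = ∑ j ∈ (Finset.univ.map I)ᶜ, x j • z j := by
  rw [← sub_eq_zero]
  refine eq_zero_of_mulVec_eq_zero_of_eq_zero_off_range M hI ?_ fun i hi => ?_
  · simp [mulVec_sub, mulVec_smul, mulVec_sum, hx, hz]
  · have hiJ : i ∈ (Finset.univ.map I)ᶜ := by simpa using hi
    simp only [Pi.sub_apply, Pi.smul_apply, Finset.sum_apply, smul_eq_mul]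
    rw [Finset.sum_congr rfl fun j _ => by rw [hzoff j i hi]]
    simp [Pi.single_apply, hiJ, mul_comm]

/-- `D • (eⱼ - B⁻¹ Mⱼ)` for the basis `B = M_I` and `D = det B`; written with Cramer's rule it needs
no inverse and is integral for integral `M`. -/
def basicKernelVec {R : Type*} [CommRing R] (M : Matrix (Fin m) (Fin n) R)
    (I : Fin m ↪ Fin n) (j : Fin n) : Fin n → R :=
  extend I (-cramer (M.submatrix id I) (M.col j)) 0 + Pi.single j (M.submatrix id I).det

section basicKernelVec

variable {R : Type*} [CommRing R] (M : Matrix (Fin m) (Fin n) R) (I : Fin m ↪ Fin n)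

lemma mulVec_basicKernelVec (j : Fin n) : M *ᵥ basicKernelVec M I j = 0 := by
  rw [basicKernelVec, mulVec_add, mulVec_extend_embedding, mulVec_neg, mulVec_cramer,
    mulVec_single, op_smul_eq_smul, neg_add_cancel]

lemma basicKernelVec_apply_of_notMem_range (j : Fin n) {i : Fin n} (hi : i ∉ Set.range I) :
    basicKernelVec M I j i = (Pi.single j (M.submatrix id I).det : Fin n → R) i := by
  simp [basicKernelVec, extend_apply' _ _ _ (by simpa using hi)]

lemma basicKernelVec_apply_embedding {j : Fin n} (hj : j ∉ Set.range I) (k : Fin m) :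
    basicKernelVec M I j (I k) = -(M.submatrix id (I.setValue k j)).det := by
  have hkj : I k ≠ j := fun h => hj ⟨k, h⟩
  have hcol : (M.submatrix id I).updateCol k (M.col j) = M.submatrix id (I.setValue k j) := by
    ext r l
    by_cases hl : l = k
    · simp [hl, Function.Embedding.setValue_eq]
    · simp [hl, Function.Embedding.setValue_eq_of_ne hl fun h => hj ⟨l, h⟩]
  simp [basicKernelVec, I.injective.extend_apply, Pi.single_eq_of_ne hkj, cramer_apply, hcol]

end basicKernelVec

lemma abs_basicKernelVec_le_mMax (A : Matrix (Fin m) (Fin n) ℤ) (I : Fin m ↪ Fin n)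
    {j : Fin n} (hj : j ∉ Set.range I) (i : Fin n) : |basicKernelVec A I j i| ≤ mMax A := by
  by_cases hi : i ∈ Set.range I
  · obtain ⟨k, rfl⟩ := hi
    rw [basicKernelVec_apply_embedding A I hj, abs_neg]
    exact abs_det_submatrix_le_mMax A _
  · rw [basicKernelVec_apply_of_notMem_range A I j hi, Pi.single_apply]
    split_ifs
    · exact abs_det_submatrix_le_mMax A I
    · exact (abs_det_submatrix_le_mMax A I).trans' (by simp)

lemma abs_sum_mul_sub_sum_round_mul_le {ι : Type*} (s : Finset ι) (c v : ι → ℝ) {C : ℝ}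
    (hv : ∀ j ∈ s, |v j| ≤ C) :
    |∑ j ∈ s, c j * v j - ∑ j ∈ s, (round (c j) : ℝ) * v j| ≤ s.card / 2 * C := by
  rw [← Finset.sum_sub_distrib]
  calc |∑ j ∈ s, (c j * v j - (round (c j) : ℝ) * v j)|
      ≤ ∑ j ∈ s, |c j - (round (c j) : ℝ)| * |v j| := by
        simpa only [← sub_mul, abs_mul] using
          Finset.abs_sum_le_sum_abs (fun j => c j * v j - (round (c j) : ℝ) * v j) s
    _ ≤ ∑ _j ∈ s, (1 / 2 : ℝ) * C :=
        Finset.sum_le_sum fun j hj => mul_le_mul (abs_sub_round _) (hv j hj) (abs_nonneg _)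
          (by norm_num)
    _ = s.card / 2 * C := by simp; ring

lemma exists_mulVec_eq_zero_abs_sub_le (A : Matrix (Fin m) (Fin n) ℤ) {I : Fin m ↪ Fin n}
    (hI : (A.submatrix id I).det ≠ 0) {x : Fin n → ℝ} (hx : Rmat A *ᵥ x = 0) :
    ∃ z : Fin n → ℤ, A *ᵥ z = 0 ∧ ∀ i, |x i - z i| ≤ ((n : ℝ) - m) / 2 * mMax A := by
  set D := (A.submatrix id I).det
  set J := (Finset.univ.map I)ᶜ
  have hD : (D : ℝ) ≠ 0 := Int.cast_ne_zero.mpr hI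
  have hrep : (D : ℝ) • x = ∑ j ∈ J, x j • Rvec (basicKernelVec A I j) := by
    refine smul_eq_sum_of_mulVec_eq_zero (Rmat A) (by rwa [det_Rmat_submatrix]) _ _
      (fun j => ?_) (fun j i hi => ?_) hx
    · rw [Rmat_mulVec_Rvec, mulVec_basicKernelVec, Rvec_zero]
    · simp only [Rvec, basicKernelVec_apply_of_notMem_range A I j hi, Pi.single_apply]
      split_ifs <;> simp [D]
  have hxi (i : Fin n) : x i = ∑ j ∈ J, x j / D * basicKernelVec A I j i := by
    have := congrFun hrep i
    simp only [Pi.smul_apply, Finset.sum_apply, smul_eq_mul, Rvec] at this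
    simp only [div_mul_eq_mul_div, ← Finset.sum_div, ← this]
    field_simp
  have hcard : (J.card : ℝ) = n - m := by
    rw [Finset.card_compl, Finset.card_map, Finset.card_univ, Fintype.card_fin, Fintype.card_fin,
      Nat.cast_sub (by simpa using Fintype.card_le_of_embedding I)]
  refine ⟨∑ j ∈ J, round (x j / D) • basicKernelVec A I j, ?_, fun i => ?_⟩
  · rw [mulVec_sum]
    exact Finset.sum_eq_zero fun j _ => by rw [mulVec_smul, mulVec_basicKernelVec, smul_zero]
  rw [hxi i, ← hcard]
  simp only [Finset.sum_apply, Pi.smul_apply, smul_eq_mul, Int.cast_sum, Int.cast_mul]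
  exact abs_sum_mul_sub_sum_round_mul_le J (fun j => x j / D)
    (fun j => ((basicKernelVec A I j i : ℤ) : ℝ)) fun j hj => by
    exact_mod_cast abs_basicKernelVec_le_mMax A I (by simpa [J] using hj) i

lemma mulVec_eq_zero_of_mem_span_kerLat {A : Matrix (Fin m) (Fin n) ℤ} {x : Fin n → ℝ}
    (hx : x ∈ Submodule.span ℝ (kerLat A)) : Rmat A *ᵥ x = 0 := by
  refine (Submodule.span_le (p := LinearMap.ker (Rmat A).mulVecLin)).mpr ?_ hx
  rintro _ ⟨z, hz, rfl⟩
  simp [Rmat_mulVec_Rvec, hz, Rvec_zero]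

lemma mem_image_knap_vA_sub_one {A : Matrix (Fin m) (Fin n) ℤ} {w : Fin n → ℝ}
    (hw : Rmat A *ᵥ w = 0) (hw1 : ∀ i, -1 ≤ w i) :
    w ∈ (fun x => x - fun _ => (1 : ℝ)) '' knap A (vA A) :=
  ⟨w + fun _ => 1, ⟨fun i => by simp; linarith [hw1 i], by simp [mulVec_add, hw, vA]⟩, by simp⟩

end

lemma muCov_one_le {N : ℕ} {K L : Set (Fin N → ℝ)} {μ : ℝ} (hμ : 0 < μ)
    (h : ∀ x ∈ Submodule.span ℝ L, ∃ y ∈ L, ∃ k ∈ K, x = y + μ • k) : muCov 1 K L ≤ μ := by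
  refine csInf_le ⟨0, fun _ h => h.1.le⟩ ⟨hμ, fun x hx => ?_⟩
  obtain ⟨y, hy, k, hk, rfl⟩ := h x hx
  exact ⟨{y}, by simpa using hy, by simp, by simpa using ⟨k, hk, rfl⟩⟩

theorem stmt_10_general {m n : ℕ} (hmn : m < n)
    (A : Matrix (Fin m) (Fin n) ℤ) (hA : regular A) :
    muCov 1 ((fun x => x - fun _ => (1 : ℝ)) '' knap A (vA A)) (kerLat A) ≤
      ((n : ℝ) - m) / 2 * (mMax A : ℝ) := by
  obtain ⟨I, hI⟩ := exists_det_submatrix_ne_zero hA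
  set μ := ((n : ℝ) - m) / 2 * (mMax A : ℝ) with hμ_def
  have hμ : 0 < μ := by
    have hM : (1 : ℤ) ≤ mMax A := (Int.one_le_abs hI).trans (abs_det_submatrix_le_mMax A I)
    have hmn' : (m : ℝ) < n := by exact_mod_cast hmn
    exact mul_pos (by linarith) (by exact_mod_cast hM)
  refine muCov_one_le hμ fun x hx => ?_
  have hx0 := mulVec_eq_zero_of_mem_span_kerLat hx
  obtain ⟨z, hz, hxz⟩ := exists_mulVec_eq_zero_abs_sub_le A hI hx0
  refine ⟨Rvec z, ⟨z, hz, rfl⟩, μ⁻¹ • (x - Rvec z),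
    mem_image_knap_vA_sub_one ?_ fun i => ?_, ?_⟩
  · simp [mulVec_smul, mulVec_sub, hx0, Rmat_mulVec_Rvec, hz, Rvec_zero]
  · rw [Pi.smul_apply, Pi.sub_apply, smul_eq_mul, le_inv_mul_iff₀ hμ]
    linarith [neg_abs_le (x i - z i), hxz i, hμ_def, show Rvec z i = z i from rfl]
  · rw [smul_inv_smul₀ hμ.ne', add_sub_cancel]

/-- Upper bound for the covering radius of P(A,v) − 1 in terms of M(A) (Lemma 5). -/
theorem stmt_10 {m n : ℕ} (hm : 1 ≤ m) (hmn : m < n)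
    (A : Matrix (Fin m) (Fin n) ℤ) (hA : regular A) :
    muCov 1 ((fun x => x - fun _ => (1 : ℝ)) '' knap A (vA A)) (kerLat A) ≤
      ((n : ℝ) - m) / 2 * (mMax A : ℝ) :=
  stmt_10_general hmn A hA
end
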